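/- For every integer n ≥ 1, in the algebra B_n the elements u and v satisfy: u·u = 2u, v·v = 2v, u·v = 0, u + v = e + f, (u|v) = 0, 2(u|u) = c⁰_n and 2(v|v) = c⁰_{n+1}, where c⁰_m = 1 − 6/((m+2)(m+3)). That is, u and v are mutually orthogonal Virasoro vectors of central charges c⁰_n and c⁰_{n+1} in the Griess algebra of A(1/2, c¹_n). -/

import Mathlib

open Matrix

/-- The basis vector `e` (the Ising vector) of the Griess algebra `B_n` of `A(1/2, c¹_n)`. -/
noncomputable def Be : Fin 3 → ℂ := ![1, 0, 0]

/-- The basis vector `f` of the Griess algebra `B_n`. -/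
noncomputable def Bf : Fin 3 → ℂ := ![0, 1, 0]

/-- The basis vector `x` of the Griess algebra `B_n`. -/
noncomputable def Bx : Fin 3 → ℂ := ![0, 0, 1]

/-- The commutative product of the Griess algebra `B_n` of `A(1/2, c¹_n)`, written in
coordinates with respect to the basis `{e, f, x}`: it is determined by
`e·e = 2e`, `f·f = 2f`, `e·f = 0`, `e·x = (1/2)x`, `f·x = (3/2)x`,
`x·x = 2n(n+6)e + 2(n+2)(n+4)f`. -/
noncomputable def Bmul (n : ℕ) (a b : Fin 3 → ℂ) : Fin 3 → ℂ :=
  ![2 * a 0 * b 0 + 2 * (n : ℂ) * ((n : ℂ) + 6) * a 2 * b 2,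
    2 * a 1 * b 1 + 2 * ((n : ℂ) + 2) * ((n : ℂ) + 4) * a 2 * b 2,
    (1 / 2) * (a 0 * b 2 + a 2 * b 0) + (3 / 2) * (a 1 * b 2 + a 2 * b 1)]

/-- The invariant symmetric bilinear form of the Griess algebra `B_n`, determined by
`(e|e) = 1/4`, `(f|f) = (3/4)(1 − 8/((n+2)(n+4)))`, `(x|x) = n(n+6)`,
`(e|f) = (e|x) = (f|x) = 0`. -/
noncomputable def Bform (n : ℕ) (a b : Fin 3 → ℂ) : ℂ :=
  (1 / 4) * a 0 * b 0 + (3 / 4) * (1 - 8 / (((n : ℂ) + 2) * ((n : ℂ) + 4))) * a 1 * b 1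
    + (n : ℂ) * ((n : ℂ) + 6) * a 2 * b 2

/-- The Virasoro vector `u = (1/(2(n+3)))(n e + (n+4) f + x)` of `B_n`. -/
noncomputable def Bu (n : ℕ) : Fin 3 → ℂ :=
  (1 / (2 * ((n : ℂ) + 3))) • ((n : ℂ) • Be + ((n : ℂ) + 4) • Bf + Bx)

/-- The Virasoro vector `v = e + f − u` of `B_n`. -/
noncomputable def Bv (n : ℕ) : Fin 3 → ℂ := Be + Bf - Bu n

/-- The involution `σ` of `B_n`: `σ(e) = e`, `σ(f) = f`, `σ(x) = −x`. -/
noncomputable def Bsigma : (Fin 3 → ℂ) → (Fin 3 → ℂ) := fun a => ![a 0, a 1, -a 2]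
/-!
The point is that `ω = e + f` acts on `B_n` as twice the identity (`e·x + f·x = (1/2 + 3/2) x`).
Hence for any `u` with `u·u = 2u` the complement `v = ω - u` is again idempotent in this sense and
`u·v = 0`; invariance of the form gives `(u|ω) = (ω|u) = (u|u)`, so `(u|v) = 0` and
`(v|v) = (ω|ω) - (u|u)`. Only `u·u = 2u`, `(u|u)` and `(ω|ω)` need computing.
-/

namespace GriessAlgebra

variable {K M : Type*} [Field K] [AddCommGroup M] [Module K M]
  {mul : M →ₗ[K] M →ₗ[K] M} {ω u : M}

theorem mul_sub_sub_eq_two_smul (hcomm : ∀ a b, mul a b = mul b a)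
    (hω : ∀ a, mul ω a = (2 : K) • a) (hu : mul u u = (2 : K) • u) :
    mul (ω - u) (ω - u) = (2 : K) • (ω - u) := by
  simp only [map_sub, LinearMap.sub_apply, hω, hu, hcomm u ω, smul_sub]
  abel

theorem mul_sub_eq_zero (hcomm : ∀ a b, mul a b = mul b a) (hω : ∀ a, mul ω a = (2 : K) • a)
    (hu : mul u u = (2 : K) • u) : mul u (ω - u) = 0 := by
  rw [map_sub, hcomm u ω, hω, hu, sub_self]

variable [NeZero (2 : K)] {B : LinearMap.BilinForm K M}

theorem form_conformal_left (hB : ∀ a b c, B (mul a b) c = B a (mul b c))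
    (hω : ∀ a, mul ω a = (2 : K) • a) (hu : mul u u = (2 : K) • u) : B ω u = B u u := by
  have h := hB ω u u
  rw [hω, hu, map_smul, map_smul, LinearMap.smul_apply, smul_eq_mul, smul_eq_mul] at h
  exact (mul_left_cancel₀ two_ne_zero h).symm

theorem form_conformal_right (hcomm : ∀ a b, mul a b = mul b a)
    (hB : ∀ a b c, B (mul a b) c = B a (mul b c))
    (hω : ∀ a, mul ω a = (2 : K) • a) (hu : mul u u = (2 : K) • u) : B u ω = B u u := by
  have h := hB u u ω
  rw [hu, hcomm u ω, hω, map_smul, map_smul, LinearMap.smul_apply, smul_eq_mul,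
    smul_eq_mul] at h
  exact mul_left_cancel₀ two_ne_zero h

theorem form_sub_eq_zero (hcomm : ∀ a b, mul a b = mul b a)
    (hB : ∀ a b c, B (mul a b) c = B a (mul b c))
    (hω : ∀ a, mul ω a = (2 : K) • a) (hu : mul u u = (2 : K) • u) : B u (ω - u) = 0 := by
  rw [map_sub, form_conformal_right hcomm hB hω hu, sub_self]

theorem form_sub_sub (hcomm : ∀ a b, mul a b = mul b a)
    (hB : ∀ a b c, B (mul a b) c = B a (mul b c))
    (hω : ∀ a, mul ω a = (2 : K) • a) (hu : mul u u = (2 : K) • u) :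
    B (ω - u) (ω - u) = B ω ω - B u u := by
  simp only [map_sub, LinearMap.sub_apply, form_conformal_left hB hω hu,
    form_conformal_right hcomm hB hω hu]
  ring

end GriessAlgebra

section Bn

variable (n : ℕ)

noncomputable def Bmulₗ : (Fin 3 → ℂ) →ₗ[ℂ] (Fin 3 → ℂ) →ₗ[ℂ] (Fin 3 → ℂ) :=
  LinearMap.mk₂ ℂ (Bmul n)
    (fun a a' b => by funext i; fin_cases i <;> simp [Bmul] <;> ring)
    (fun c a b => by funext i; fin_cases i <;> simp [Bmul] <;> ring)
    (fun a b b' => by funext i; fin_cases i <;> simp [Bmul] <;> ring)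
    (fun c a b => by funext i; fin_cases i <;> simp [Bmul] <;> ring)

noncomputable def Bformₗ : LinearMap.BilinForm ℂ (Fin 3 → ℂ) :=
  LinearMap.mk₂ ℂ (Bform n)
    (fun a a' b => by simp [Bform]; ring)
    (fun c a b => by simp [Bform]; ring)
    (fun a b b' => by simp [Bform]; ring)
    (fun c a b => by simp [Bform]; ring)

theorem Bmul_comm (a b : Fin 3 → ℂ) : Bmul n a b = Bmul n b a := by
  funext i; fin_cases i <;> simp [Bmul] <;> ring

theorem Bmul_Be_add_Bf (a : Fin 3 → ℂ) : Bmul n (Be + Bf) a = (2 : ℂ) • a := by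
  funext i
  fin_cases i <;> simp [Bmul, Be, Bf]
  ring

theorem Bform_Bmul (a b c : Fin 3 → ℂ) :
    Bform n (Bmul n a b) c = Bform n a (Bmul n b c) := by
  have h2 : (n : ℂ) + 2 ≠ 0 := by norm_cast
  have h4 : (n : ℂ) + 4 ≠ 0 := by norm_cast
  -- `(f·x|x) = (f|x·x)`: the only instance of invariance that is not immediate
  have key : 2 * ((n : ℂ) + 2) * ((n : ℂ) + 4) *
      ((3 / 4) * (1 - 8 / (((n : ℂ) + 2) * ((n : ℂ) + 4))))
      = (3 / 2) * ((n : ℂ) * ((n : ℂ) + 6)) := by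
    field_simp
    ring
  simp only [Bform, Bmul, Matrix.cons_val_zero, Matrix.cons_val_one, Matrix.cons_val_two,
    Matrix.tail_cons, Matrix.head_cons]
  linear_combination (a 2 * b 2 * c 1 - a 1 * b 2 * c 2) * key

theorem Bu_eq :
    Bu n = ![(n : ℂ) / (2 * (n + 3)), (n + 4) / (2 * (n + 3)), 1 / (2 * (n + 3))] := by
  have h : (n : ℂ) + 3 ≠ 0 := by norm_cast
  funext i; fin_cases i <;> simp [Bu, Be, Bf, Bx] <;> field_simp

theorem Bu_mul_self : Bmul n (Bu n) (Bu n) = (2 : ℂ) • Bu n := by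
  have h : (n : ℂ) + 3 ≠ 0 := by norm_cast
  rw [Bu_eq]
  funext i; fin_cases i <;> simp [Bmul] <;> field_simp <;> ring

theorem two_mul_Bform_Bu_self :
    2 * Bform n (Bu n) (Bu n) = 1 - 6 / (((n : ℂ) + 2) * ((n : ℂ) + 3)) := by
  have h2 : (n : ℂ) + 2 ≠ 0 := by norm_cast
  have h3 : (n : ℂ) + 3 ≠ 0 := by norm_cast
  have h4 : (n : ℂ) + 4 ≠ 0 := by norm_cast
  simp [Bform, Bu_eq]
  field_simp
  ring

theorem two_mul_Bform_Be_add_Bf_self :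
    2 * Bform n (Be + Bf) (Be + Bf) = 2 - 12 / (((n : ℂ) + 2) * ((n : ℂ) + 4)) := by
  simp [Bform, Be, Bf]
  ring

end Bn

open GriessAlgebra in
theorem stmt_8_general (n : ℕ) :
    Bmul n (Bu n) (Bu n) = (2 : ℂ) • Bu n ∧
    Bmul n (Bv n) (Bv n) = (2 : ℂ) • Bv n ∧
    Bmul n (Bu n) (Bv n) = 0 ∧
    Bu n + Bv n = Be + Bf ∧
    Bform n (Bu n) (Bv n) = 0 ∧
    2 * Bform n (Bu n) (Bu n) = 1 - 6 / (((n : ℂ) + 2) * ((n : ℂ) + 3)) ∧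
    2 * Bform n (Bv n) (Bv n) = 1 - 6 / (((n : ℂ) + 3) * ((n : ℂ) + 4)) := by
  have hcomm : ∀ a b, Bmulₗ n a b = Bmulₗ n b a := Bmul_comm n
  have hω : ∀ a, Bmulₗ n (Be + Bf) a = (2 : ℂ) • a := Bmul_Be_add_Bf n
  have hB : ∀ a b c, Bformₗ n (Bmulₗ n a b) c = Bformₗ n a (Bmulₗ n b c) := Bform_Bmul n
  have hu : Bmulₗ n (Bu n) (Bu n) = (2 : ℂ) • Bu n := Bu_mul_self n
  refine ⟨hu, mul_sub_sub_eq_two_smul hcomm hω hu, mul_sub_eq_zero hcomm hω hu,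
    add_sub_cancel _ _, form_sub_eq_zero hcomm hB hω hu, two_mul_Bform_Bu_self n, ?_⟩
  have h2 : (n : ℂ) + 2 ≠ 0 := by norm_cast
  have h3 : (n : ℂ) + 3 ≠ 0 := by norm_cast
  have h4 : (n : ℂ) + 4 ≠ 0 := by norm_cast
  calc 2 * Bform n (Bv n) (Bv n)
      = 2 * Bform n (Be + Bf) (Be + Bf) - 2 * Bform n (Bu n) (Bu n) := by
        rw [← mul_sub]
        exact congrArg (2 * ·) (form_sub_sub hcomm hB hω hu)
    _ = (2 - 12 / (((n : ℂ) + 2) * ((n : ℂ) + 4)))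
          - (1 - 6 / (((n : ℂ) + 2) * ((n : ℂ) + 3))) := by
        rw [two_mul_Bform_Be_add_Bf_self, two_mul_Bform_Bu_self]
    _ = 1 - 6 / (((n : ℂ) + 3) * ((n : ℂ) + 4)) := by
        field_simp
        ring

theorem stmt_8 (n : ℕ) (hn : 1 ≤ n) :
    Bmul n (Bu n) (Bu n) = (2 : ℂ) • Bu n ∧
    Bmul n (Bv n) (Bv n) = (2 : ℂ) • Bv n ∧
    Bmul n (Bu n) (Bv n) = 0 ∧
    Bu n + Bv n = Be + Bf ∧
    Bform n (Bu n) (Bv n) = 0 ∧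
    2 * Bform n (Bu n) (Bu n) = 1 - 6 / (((n : ℂ) + 2) * ((n : ℂ) + 3)) ∧
    2 * Bform n (Bv n) (Bv n) = 1 - 6 / (((n : ℂ) + 3) * ((n : ℂ) + 4)) :=
  stmt_8_general n
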